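/- For the CNOT gate C on ℂ²⊗ℂ² and any unitary operators U, V on ℂ², D(C, U⊗V) ≥ 1/2. -/

import Mathlib

open scoped InnerProductSpace

noncomputable def Dpsi {H : Type*} [NormedAddCommGroup H] [InnerProductSpace ℂ H]
    [FiniteDimensional ℂ H] (U V : H →L[ℂ] H) (ψ : H) : ℝ :=
  Real.sqrt (1 - ‖⟪ψ, (star U * V) ψ⟫_ℂ‖ ^ 2)

noncomputable def uDist {H : Type*} [NormedAddCommGroup H] [InnerProductSpace ℂ H]
    [FiniteDimensional ℂ H] (U V : H →L[ℂ] H) : ℝ :=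
  sSup {d : ℝ | ∃ ψ : H, ‖ψ‖ = 1 ∧ d = Dpsi U V ψ}

/-- ℂ² ⊗ ℂ² realized as `EuclideanSpace ℂ (Fin 2 × Fin 2)`. -/
abbrev TwoQubit := EuclideanSpace ℂ (Fin 2 × Fin 2)

/-!
Test the distance on the product states `|i⟩ ⊗ |0⟩`. The CNOT gate sends `|i⟩ ⊗ |0⟩` to
`|i⟩ ⊗ |i⟩`, so the overlap `⟨C ψ, (U ⊗ V) ψ⟩` is `U i i * V i 0`. Since the first column of the
unitary `V` has unit norm, one of `|V 0 0|², |V 1 0|²` is at most `1/2`; for that `i` the overlap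
has squared modulus at most `1/2`, and the distance is at least `√(1/2) ≥ 1/2`.
-/

section Distance

variable {H : Type*} [NormedAddCommGroup H] [InnerProductSpace ℂ H] [FiniteDimensional ℂ H]

lemma Dpsi_eq_sqrt_inner (A B : H →L[ℂ] H) (ψ : H) :
    Dpsi A B ψ = Real.sqrt (1 - ‖⟪A ψ, B ψ⟫_ℂ‖ ^ 2) := by
  rw [Dpsi, mul_apply_eq_comp, ContinuousLinearMap.star_eq_adjoint,
    ContinuousLinearMap.adjoint_inner_right]

lemma Dpsi_le_one (A B : H →L[ℂ] H) (ψ : H) : Dpsi A B ψ ≤ 1 :=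
  Real.sqrt_le_one.mpr (by linarith [sq_nonneg ‖⟪ψ, (star A * B) ψ⟫_ℂ‖])

lemma Dpsi_le_uDist (A B : H →L[ℂ] H) {ψ : H} (hψ : ‖ψ‖ = 1) : Dpsi A B ψ ≤ uDist A B :=
  le_csSup ⟨1, by rintro d ⟨φ, -, rfl⟩; exact Dpsi_le_one A B φ⟩ ⟨ψ, hψ, rfl⟩

lemma one_half_le_Dpsi {A B : H →L[ℂ] H} {ψ : H} (h : ‖⟪A ψ, B ψ⟫_ℂ‖ ^ 2 ≤ 3 / 4) :
    1 / 2 ≤ Dpsi A B ψ := by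
  rw [Dpsi_eq_sqrt_inner, show (1 / 2 : ℝ) = Real.sqrt ((1 / 2) ^ 2) by
    rw [Real.sqrt_sq (by norm_num)]]
  exact Real.sqrt_le_sqrt (by linarith)

end Distance

lemma Matrix.sum_norm_sq_col_of_mem_unitaryGroup {𝕜 n : Type*} [RCLike 𝕜] [Fintype n]
    [DecidableEq n] {U : Matrix n n 𝕜} (hU : U ∈ Matrix.unitaryGroup n 𝕜) (j : n) :
    ∑ i, ‖U i j‖ ^ 2 = 1 := by
  have h := congrFun (congrFun (Matrix.mem_unitaryGroup_iff'.mp hU) j) j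
  simp only [Matrix.mul_apply, Matrix.star_apply, Matrix.one_apply_eq, RCLike.star_def,
    RCLike.conj_mul] at h
  exact_mod_cast h

lemma exists_norm_sq_le_half_of_mem_unitaryGroup {V : Matrix (Fin 2) (Fin 2) ℂ}
    (hV : V ∈ Matrix.unitaryGroup (Fin 2) ℂ) (j : Fin 2) : ∃ i, ‖V i j‖ ^ 2 ≤ 1 / 2 := by
  have h := Matrix.sum_norm_sq_col_of_mem_unitaryGroup hV j
  rw [Fin.sum_univ_two] at h
  rcases le_total (‖V 0 j‖ ^ 2) (1 / 2) with h0 | h0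
  · exact ⟨0, h0⟩
  · exact ⟨1, by linarith⟩

lemma cnot_apply_single {C : TwoQubit →L[ℂ] TwoQubit}
    (hC : ∀ (ψ : TwoQubit) (i j : Fin 2), C ψ (i, j) = ψ (i, if i = 0 then j else 1 - j))
    (i : Fin 2) :
    C (EuclideanSpace.single (i, 0) 1) = EuclideanSpace.single (i, i) 1 := by
  ext ⟨a, b⟩
  rw [hC]
  fin_cases i <;> fin_cases a <;> fin_cases b <;> simp

lemma kron_apply_single {T : TwoQubit →L[ℂ] TwoQubit} {U V : Matrix (Fin 2) (Fin 2) ℂ}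
    (hT : ∀ (ψ : TwoQubit) (i j : Fin 2), T ψ (i, j) = ∑ k, ∑ l, U i k * V j l * ψ (k, l))
    (i j k l : Fin 2) :
    T (EuclideanSpace.single (k, l) 1) (i, j) = U i k * V j l := by
  rw [hT]
  fin_cases k <;> fin_cases l <;> simp [Fin.sum_univ_two]

lemma inner_cnot_kron_single {C T : TwoQubit →L[ℂ] TwoQubit}
    (hC : ∀ (ψ : TwoQubit) (i j : Fin 2), C ψ (i, j) = ψ (i, if i = 0 then j else 1 - j))
    {U V : Matrix (Fin 2) (Fin 2) ℂ}
    (hT : ∀ (ψ : TwoQubit) (i j : Fin 2), T ψ (i, j) = ∑ k, ∑ l, U i k * V j l * ψ (k, l))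
    (i : Fin 2) :
    ⟪C (EuclideanSpace.single (i, 0) 1), T (EuclideanSpace.single (i, 0) 1)⟫_ℂ
      = U i i * V i 0 := by
  rw [cnot_apply_single hC, EuclideanSpace.inner_single_left, kron_apply_single hT, map_one,
    one_mul]

theorem stmt_19 (C T : TwoQubit →L[ℂ] TwoQubit)
    (hC : ∀ (ψ : TwoQubit) (i j : Fin 2),
      C ψ (i, j) = ψ (i, if i = 0 then j else 1 - j))
    (U V : Matrix (Fin 2) (Fin 2) ℂ)
    (hU : U ∈ Matrix.unitaryGroup (Fin 2) ℂ) (hV : V ∈ Matrix.unitaryGroup (Fin 2) ℂ)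
    (hT : ∀ (ψ : TwoQubit) (i j : Fin 2),
      T ψ (i, j) = ∑ k, ∑ l, U i k * V j l * ψ (k, l)) :
    uDist C T ≥ 1 / 2 := by
  obtain ⟨i, hVi⟩ := exists_norm_sq_le_half_of_mem_unitaryGroup hV 0
  have hUi : ‖U i i‖ ^ 2 ≤ 1 := pow_le_one₀ (norm_nonneg _) (entry_norm_bound_of_unitary hU i i)
  have hψ : ‖(EuclideanSpace.single (i, 0) 1 : TwoQubit)‖ = 1 := by simp
  refine le_trans (one_half_le_Dpsi ?_) (Dpsi_le_uDist C T hψ)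
  calc ‖⟪C (EuclideanSpace.single (i, 0) 1), T (EuclideanSpace.single (i, 0) 1)⟫_ℂ‖ ^ 2
      = ‖U i i‖ ^ 2 * ‖V i 0‖ ^ 2 := by rw [inner_cnot_kron_single hC hT, norm_mul, mul_pow]
    _ ≤ 1 * (1 / 2) := mul_le_mul hUi hVi (sq_nonneg _) zero_le_one
    _ ≤ 3 / 4 := by norm_num
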